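/- arXiv:1903.00867 — 2 statements merged into one kernel-verified Lean document; each statement's English description precedes it below -/
import Mathlib

section
/- For a > 0 define v_a : ℝ → ℝ by v_a(x) = 2·arctan(x/a). Let n ≥ 1, let K, L ≥ 0 be natural numbers, let α > 0, β ∈ [0,1), a_1,…,a_K > 0, b_1,…,b_L > 0, and let μ = (μ_1,…,μ_n) ∈ ℤ^n with μ_1 > μ_2 > … > μ_n. Then the function V : ℝ^n → ℝ defined by V(ξ) = Σ_{j=1}^n ( (α/2)ξ_j² − 2π(μ_j+β)ξ_j + Σ_{k=1}^K ∫_0^{ξ_j} v_{a_k}(x) dx ) + Σ_{1≤j<j′≤n} Σ_{l=1}^L ∫_0^{ξ_j−ξ_{j′}} v_{b_l}(x) dx tends to +∞ as ‖ξ‖ → ∞; consequently V attains a global minimum on ℝ^n. -/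
/-!
Each integral `∫₀^t v_a` is nonnegative, since `v_a` has the sign of its argument, so `V` is
bounded below, with `cⱼ = 2π(μⱼ + β)`, by `∑ⱼ ((α/2) ξⱼ² - cⱼ ξⱼ) ≥ (α/2)‖ξ‖² - (∑ⱼ |cⱼ|)‖ξ‖`,
which tends to `+∞`.
A continuous coercive function on the proper space `ℝⁿ` attains its minimum.
-/

open Real Finset

/-- The rational function `v_a(x) = 2 arctan(x/a)`. -/
noncomputable def vRat (a x : ℝ) : ℝ := 2 * Real.arctan (x / a)

open Filter Bornology

lemma integral_zero_nonneg_of_sign {f : ℝ → ℝ} (hpos : ∀ x, 0 ≤ x → 0 ≤ f x)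
    (hneg : ∀ x, x ≤ 0 → f x ≤ 0) (t : ℝ) : 0 ≤ ∫ x in (0:ℝ)..t, f x := by
  rcases le_total 0 t with ht | ht
  · exact intervalIntegral.integral_nonneg ht fun x hx => hpos x hx.1
  · rw [intervalIntegral.integral_symm, ← intervalIntegral.integral_neg]
    exact intervalIntegral.integral_nonneg ht fun x hx => neg_nonneg.2 (hneg x hx.2)

lemma continuous_vRat (a : ℝ) : Continuous (vRat a) := by
  unfold vRat
  fun_prop

lemma integral_vRat_nonneg {a : ℝ} (ha : 0 < a) (t : ℝ) : 0 ≤ ∫ x in (0:ℝ)..t, vRat a x :=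
  integral_zero_nonneg_of_sign
    (fun _ hx => mul_nonneg zero_le_two (arctan_nonneg.2 (div_nonneg hx ha.le)))
    (fun _ hx => mul_nonpos_of_nonneg_of_nonpos zero_le_two
      (arctan_le_zero.2 (div_nonpos_of_nonpos_of_nonneg hx ha.le))) t

lemma continuous_integral_vRat (a : ℝ) : Continuous fun t => ∫ x in (0:ℝ)..t, vRat a x :=
  intervalIntegral.continuous_primitive (fun _ _ => (continuous_vRat a).intervalIntegrable _ _) 0

section Coercive

variable {ι : Type*} [Fintype ι]

lemma sq_norm_le_sum_sq (ξ : ι → ℝ) : ‖ξ‖ ^ 2 ≤ ∑ j, ξ j ^ 2 := by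
  have hsum : 0 ≤ ∑ j, ξ j ^ 2 := sum_nonneg fun j _ => sq_nonneg _
  refine (Real.le_sqrt (norm_nonneg ξ) hsum).1 ((pi_norm_le_iff_of_nonneg (sqrt_nonneg _)).2 ?_)
  exact fun j => Real.abs_le_sqrt (single_le_sum (fun i _ => sq_nonneg (ξ i)) (mem_univ j))

lemma sum_mul_le_sum_abs_mul_norm (c ξ : ι → ℝ) :
    ∑ j, c j * ξ j ≤ (∑ j, |c j|) * ‖ξ‖ := by
  rw [sum_mul]
  refine sum_le_sum fun j _ => ?_
  calc c j * ξ j ≤ |c j| * |ξ j| := abs_mul (c j) (ξ j) ▸ le_abs_self _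
    _ ≤ |c j| * ‖ξ‖ := by gcongr; exact norm_le_pi_norm ξ j

lemma tendsto_quadratic_sub_linear_atTop {α : ℝ} (hα : 0 < α) (C : ℝ) :
    Tendsto (fun r : ℝ => α / 2 * r ^ 2 - C * r) atTop atTop := by
  have hfactor : (fun r : ℝ => α / 2 * r ^ 2 - C * r) = fun r => r * (α / 2 * r - C) := by
    funext r; ring
  rw [hfactor]
  exact tendsto_id.atTop_mul_atTop₀
    (tendsto_atTop_add_const_right _ (-C) (tendsto_id.const_mul_atTop (half_pos hα)))

lemma tendsto_cobounded_of_quadratic_le {α : ℝ} (hα : 0 < α) (c : ι → ℝ)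
    {V : (ι → ℝ) → ℝ} (hV : ∀ ξ, ∑ j, (α / 2 * ξ j ^ 2 - c j * ξ j) ≤ V ξ) :
    Tendsto V (cobounded (ι → ℝ)) atTop := by
  rw [← comap_norm_atTop]
  refine tendsto_atTop_mono (fun ξ => ?_)
    ((tendsto_quadratic_sub_linear_atTop hα (∑ j, |c j|)).comp tendsto_comap)
  calc α / 2 * ‖ξ‖ ^ 2 - (∑ j, |c j|) * ‖ξ‖
      ≤ α / 2 * ∑ j, ξ j ^ 2 - ∑ j, c j * ξ j := by
        gcongr
        · exact sq_norm_le_sum_sq ξ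
        · exact sum_mul_le_sum_abs_mul_norm c ξ
    _ = ∑ j, (α / 2 * ξ j ^ 2 - c j * ξ j) := by rw [sum_sub_distrib, mul_sum]
    _ ≤ V ξ := hV ξ

end Coercive

theorem ratA_morse_coercive_general
    (n K L : ℕ)
    (α β : ℝ) (hα : 0 < α)
    (a : Fin K → ℝ) (b : Fin L → ℝ)
    (ha : ∀ k, 0 < a k) (hb : ∀ l, 0 < b l)
    (μ : Fin n → ℤ)
    (V : (Fin n → ℝ) → ℝ)
    (hV : ∀ ξ : Fin n → ℝ, V ξ =
      (∑ j, ((α / 2) * ξ j ^ 2 - 2 * π * ((μ j : ℝ) + β) * ξ j +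
        ∑ k, ∫ x in (0:ℝ)..(ξ j), vRat (a k) x)) +
      (∑ j, ∑ j' ∈ Finset.univ.filter (fun j' => j < j'), ∑ l,
        ∫ x in (0:ℝ)..(ξ j - ξ j'), vRat (b l) x)) :
    Filter.Tendsto V (Filter.comap (fun ξ : Fin n → ℝ => ‖ξ‖) Filter.atTop)
      Filter.atTop ∧
    ∃ ξ₀ : Fin n → ℝ, ∀ ξ : Fin n → ℝ, V ξ₀ ≤ V ξ := by
  have hlower : ∀ ξ : Fin n → ℝ,
      ∑ j, (α / 2 * ξ j ^ 2 - 2 * π * ((μ j : ℝ) + β) * ξ j) ≤ V ξ := fun ξ => by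
    rw [hV ξ]
    refine le_add_of_le_of_nonneg (sum_le_sum fun j _ => ?_) ?_
    · exact le_add_of_nonneg_right (sum_nonneg fun k _ => integral_vRat_nonneg (ha k) _)
    · exact sum_nonneg fun j _ => sum_nonneg fun j' _ =>
        sum_nonneg fun l _ => integral_vRat_nonneg (hb l) _
  have hcont : Continuous V := by
    rw [funext hV]
    have hprimitive := continuous_integral_vRat
    fun_prop
  have htend := tendsto_cobounded_of_quadratic_le hα _ hlower
  rw [comap_norm_atTop]
  exact ⟨htend, hcont.exists_forall_le (Metric.cobounded_eq_cocompact (α := Fin n → ℝ) ▸ htend)⟩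

/-- The rational type A Yang–Yang Morse function is coercive (it tends to `+∞` as
`‖ξ‖ → ∞`) and consequently attains a global minimum on `ℝⁿ`. -/
theorem ratA_morse_coercive
    (n K L : ℕ) (hn : 1 ≤ n)
    (α β : ℝ) (hα : 0 < α) (hβ0 : 0 ≤ β) (hβ1 : β < 1)
    (a : Fin K → ℝ) (b : Fin L → ℝ)
    (ha : ∀ k, 0 < a k) (hb : ∀ l, 0 < b l)
    (μ : Fin n → ℤ) (hμ : ∀ j j' : Fin n, j < j' → μ j' < μ j)
    (V : (Fin n → ℝ) → ℝ)
    (hV : ∀ ξ : Fin n → ℝ, V ξ =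
      (∑ j, ((α / 2) * ξ j ^ 2 - 2 * π * ((μ j : ℝ) + β) * ξ j +
        ∑ k, ∫ x in (0:ℝ)..(ξ j), vRat (a k) x)) +
      (∑ j, ∑ j' ∈ Finset.univ.filter (fun j' => j < j'), ∑ l,
        ∫ x in (0:ℝ)..(ξ j - ξ j'), vRat (b l) x)) :
    Filter.Tendsto V (Filter.comap (fun ξ : Fin n → ℝ => ‖ξ‖) Filter.atTop)
      Filter.atTop ∧
    ∃ ξ₀ : Fin n → ℝ, ∀ ξ : Fin n → ℝ, V ξ₀ ≤ V ξ :=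
  ratA_morse_coercive_general n K L α β hα a b ha hb μ V hV
end

section
/- For a > 0 define v_a : ℝ → ℝ by v_a(x) = 2·arctan(x/a). Let n ≥ 1, let K, L ≥ 0 be natural numbers, let α > 0, ε ∈ {0,1}, a_1,…,a_K > 0 and b_1,…,b_L > 0, and let μ = (μ_1,…,μ_n) ∈ ℤ^n with μ_1 > μ_2 > … > μ_n > 0. If ξ = (ξ_1,…,ξ_n) ∈ ℝ^n satisfies, for every j ∈ {1,…,n}, the equation 2α ξ_j + Σ_{k=1}^K v_{a_k}(ξ_j) + Σ_{j′≠j} Σ_{l=1}^L ( v_{b_l}(ξ_{j′} + ξ_j) − v_{b_l}(ξ_{j′} − ξ_j) ) = 2π(μ_j + ε/2), then for all 1 ≤ j ≤ n one has π(μ_j + ε/2)/(α + κ₋) ≤ ξ_j ≤ π(μ_j + ε/2)/α, and for all 1 ≤ j < j′ ≤ n one has π(μ_j − μ_{j′})/(α + κ₋) ≤ ξ_j − ξ_{j′} ≤ π(μ_j − μ_{j′})/α, where κ₋ = Σ_{k=1}^K a_k^{−1} + 2(n−1) Σ_{l=1}^L b_l^{−1}. In particular ξ_1 > ξ_2 >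 … > ξ_n > 0. -/
/-!
Since `v_a` is increasing and `2/a`-Lipschitz, the left-hand side of the `j`-th equation, viewed
as a function of `ξ_j` alone, has all its difference quotients in `[2α, 2(α + κ₋)]`; it vanishes
at `0` and equals `2π(μ_j + ε/2) > 0` at `ξ_j`, which pins `ξ_j` between `π(μ_j + ε/2)/(α + κ₋)`
and `π(μ_j + ε/2)/α`. Subtracting the `j'`-th equation from the `j`-th gives, as a function of
`ξ_j` with `ξ_j'` fixed, again a function with slopes in `[2α, 2(α + κ₋)]`, vanishing at `ξ_j'`
and equal to `2π(μ_j - μ_j') > 0` at `ξ_j`; the same argument bounds `ξ_j - ξ_j'`.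
-/

open Real Finset

def SlopeBounded (c₁ c₂ : ℝ) (f : ℝ → ℝ) : Prop :=
  ∀ ⦃x y⦄, x ≤ y → c₁ * (y - x) ≤ f y - f x ∧ f y - f x ≤ c₂ * (y - x)

namespace SlopeBounded

variable {c₁ c₂ d₁ d₂ : ℝ} {f g : ℝ → ℝ}

theorem mono (h : SlopeBounded c₁ c₂ f) (h₁ : d₁ ≤ c₁) (h₂ : c₂ ≤ d₂) :
    SlopeBounded d₁ d₂ f := fun x y hxy => by
  obtain ⟨hl, hu⟩ := h hxy
  have : 0 ≤ y - x := sub_nonneg.2 hxy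
  constructor <;> nlinarith

theorem add (hf : SlopeBounded c₁ c₂ f) (hg : SlopeBounded d₁ d₂ g) :
    SlopeBounded (c₁ + d₁) (c₂ + d₂) (fun x => f x + g x) := fun x y hxy => by
  obtain ⟨hfl, hfu⟩ := hf hxy
  obtain ⟨hgl, hgu⟩ := hg hxy
  constructor <;> linarith

theorem sum {ι : Type*} (s : Finset ι) {c₁ c₂ : ι → ℝ} {f : ι → ℝ → ℝ}
    (h : ∀ i ∈ s, SlopeBounded (c₁ i) (c₂ i) (f i)) :
    SlopeBounded (∑ i ∈ s, c₁ i) (∑ i ∈ s, c₂ i) (fun x => ∑ i ∈ s, f i x) :=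
  fun x y hxy => by
  simp only [← sum_sub_distrib, sum_mul]
  exact ⟨sum_le_sum fun i hi => (h i hi hxy).1, sum_le_sum fun i hi => (h i hi hxy).2⟩

theorem const_mul (hf : SlopeBounded c₁ c₂ f) {c : ℝ} (hc : 0 ≤ c) :
    SlopeBounded (c * c₁) (c * c₂) (fun x => c * f x) := fun x y hxy => by
  obtain ⟨hl, hu⟩ := hf hxy
  rw [← mul_sub, mul_assoc, mul_assoc]
  exact ⟨mul_le_mul_of_nonneg_left hl hc, mul_le_mul_of_nonneg_left hu hc⟩

theorem sub_const (hf : SlopeBounded c₁ c₂ f) (t : ℝ) :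
    SlopeBounded c₁ c₂ (fun x => f x - t) := fun x y hxy => by
  simpa only [sub_sub_sub_cancel_right] using hf hxy

theorem comp_const_add (hf : SlopeBounded c₁ c₂ f) (t : ℝ) :
    SlopeBounded c₁ c₂ (fun x => f (t + x)) := fun x y hxy => by
  simpa only [add_sub_add_left_eq_sub] using hf ((add_le_add_iff_left t).2 hxy)

theorem comp_sub_const (hf : SlopeBounded c₁ c₂ f) (t : ℝ) :
    SlopeBounded c₁ c₂ (fun x => f (x - t)) := fun x y hxy => by
  simpa only [sub_sub_sub_cancel_right] using hf (sub_le_sub_right hxy t)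

theorem neg_comp_const_sub (hf : SlopeBounded c₁ c₂ f) (t : ℝ) :
    SlopeBounded c₁ c₂ (fun x => -f (t - x)) := fun x y hxy => by
  simpa only [neg_sub_neg, sub_sub_sub_cancel_left] using hf (sub_le_sub_left hxy t)

theorem sub_bounds_of_eq (hf : SlopeBounded (2 * c₁) (2 * c₂) f) (hc₁ : 0 < c₁) {m : ℝ}
    (hm : 0 < m) {x y : ℝ} (hxy : f y - f x = 2 * π * m) :
    x < y ∧ π * m / c₂ ≤ y - x ∧ y - x ≤ π * m / c₁ := by
  have hπm : 0 < π * m := mul_pos pi_pos hm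
  have hlt : x < y := by
    by_contra! hyx
    nlinarith [(hf hyx).1]
  obtain ⟨hl, hu⟩ := hf hlt.le
  have hc₂ : 0 < c₂ := by nlinarith
  refine ⟨hlt, (div_le_iff₀ hc₂).2 (by linarith), (le_div_iff₀ hc₁).2 (by linarith)⟩

end SlopeBounded

theorem slopeBounded_const_mul (c : ℝ) : SlopeBounded c c (fun x => c * x) :=
  fun x y _ => by rw [mul_sub]; exact ⟨le_rfl, le_rfl⟩

theorem vRat_neg (a x : ℝ) : vRat a (-x) = -vRat a x := by
  simp only [vRat, neg_div, arctan_neg, mul_neg]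

theorem slopeBounded_vRat {a : ℝ} (ha : 0 < a) : SlopeBounded 0 (2 * a⁻¹) (vRat a) :=
  fun x y hxy => by
  have hxy' : x / a ≤ y / a := div_le_div_of_nonneg_right hxy ha.le
  have hlip : arctan (y / a) - arctan (x / a) ≤ 1 * (y / a - x / a) := by
    refine image_sub_le_mul_sub_of_deriv_le differentiable_arctan (fun z => ?_) hxy'
    rw [Real.deriv_arctan]
    exact div_le_one_of_le₀ (by nlinarith [sq_nonneg z]) (by positivity)
  have hmono := arctan_strictMono.monotone hxy'
  refine ⟨by simp only [vRat]; linarith, ?_⟩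
  calc vRat a y - vRat a x = 2 * (arctan (y / a) - arctan (x / a)) := by simp only [vRat]; ring
    _ ≤ 2 * (y / a - x / a) := by linarith
    _ = 2 * a⁻¹ * (y - x) := by ring

section BetheSystem

variable {n K L : ℕ} (α : ℝ) (a : Fin K → ℝ) (b : Fin L → ℝ) (ξ : Fin n → ℝ)

noncomputable def kappaMinus (n : ℕ) (a : Fin K → ℝ) (b : Fin L → ℝ) : ℝ :=
  (∑ k, (a k)⁻¹) + 2 * ((n : ℝ) - 1) * (∑ l, (b l)⁻¹)

noncomputable def crossTerm (t x : ℝ) : ℝ :=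
  ∑ l, (vRat (b l) (t + x) - vRat (b l) (t - x))

/-- The left-hand side of the `j`-th equation, as a function of `x = ξ j`. -/
noncomputable def betheLhs (j : Fin n) (x : ℝ) : ℝ :=
  2 * α * x + (∑ k, vRat (a k) x) + ∑ j' ∈ univ.erase j, crossTerm b (ξ j') x

/-- The `j`-th minus the `j'`-th equation, as a function of `x = ξ j` with `ξ j'` fixed; the
two coupling terms between `ξ j` and `ξ j'` combine to `2 ∑ₗ v_{b_l}(ξ j - ξ j')`. -/
noncomputable def betheDiff (j j' : Fin n) (x : ℝ) : ℝ :=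
  2 * α * (x - ξ j') + ((∑ k, vRat (a k) x) - ∑ k, vRat (a k) (ξ j')) +
    (∑ m ∈ (univ.erase j).erase j', (crossTerm b (ξ m) x - crossTerm b (ξ m) (ξ j'))) +
    2 * ∑ l, vRat (b l) (x - ξ j')

variable {a b}

theorem slopeBounded_sum_vRat (ha : ∀ k, 0 < a k) :
    SlopeBounded 0 (2 * ∑ k, (a k)⁻¹) (fun x => ∑ k, vRat (a k) x) := by
  simpa only [sum_const_zero, ← mul_sum] using
    SlopeBounded.sum univ fun k _ => slopeBounded_vRat (ha k)

theorem slopeBounded_crossTerm (hb : ∀ l, 0 < b l) (t : ℝ) :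
    SlopeBounded 0 (4 * ∑ l, (b l)⁻¹) (crossTerm b t) := by
  have h := SlopeBounded.sum univ fun l _ =>
    ((slopeBounded_vRat (hb l)).comp_const_add t).add
      ((slopeBounded_vRat (hb l)).neg_comp_const_sub t)
  convert h using 1
  · simp
  · rw [mul_sum]; exact sum_congr rfl fun l _ => by ring
  · ext x; simp only [crossTerm, sub_eq_add_neg]

theorem crossTerm_sub_crossTerm (t x : ℝ) :
    crossTerm b t x - crossTerm b x t = 2 * ∑ l, vRat (b l) (x - t) := by
  rw [crossTerm, crossTerm, ← sum_sub_distrib, mul_sum]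
  refine sum_congr rfl fun l _ => ?_
  rw [show t - x = -(x - t) by ring, vRat_neg, add_comm t x]
  ring

theorem betheLhs_apply_zero (j : Fin n) : betheLhs α a b ξ j 0 = 0 := by
  simp [betheLhs, crossTerm, vRat]

theorem betheDiff_apply_right (j j' : Fin n) : betheDiff α a b ξ j j' (ξ j') = 0 := by
  simp [betheDiff, vRat]

theorem betheDiff_apply_left {j j' : Fin n} (h : j ≠ j') :
    betheDiff α a b ξ j j' (ξ j) = betheLhs α a b ξ j (ξ j) - betheLhs α a b ξ j' (ξ j') := by
  have hj' : j' ∈ univ.erase j := mem_erase.2 ⟨h.symm, mem_univ _⟩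
  have hj : j ∈ univ.erase j' := mem_erase.2 ⟨h, mem_univ _⟩
  rw [betheLhs, betheLhs, ← sum_erase_add _ _ hj', ← sum_erase_add _ _ hj,
    erase_right_comm (a := j'), betheDiff, sum_sub_distrib, ← crossTerm_sub_crossTerm]
  ring

theorem slopeBounded_betheLhs (ha : ∀ k, 0 < a k) (hb : ∀ l, 0 < b l) (j : Fin n) :
    SlopeBounded (2 * α) (2 * (α + kappaMinus n a b)) (betheLhs α a b ξ j) := by
  have h := ((slopeBounded_const_mul (2 * α)).add (slopeBounded_sum_vRat ha)).add
    (SlopeBounded.sum (univ.erase j) fun m _ => slopeBounded_crossTerm hb (ξ m))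
  have hcard : ((univ.erase j).card : ℝ) + 1 = n := by
    exact_mod_cast (card_erase_add_one (mem_univ j)).trans (by simp)
  refine h.mono (by simp) (le_of_eq ?_)
  rw [sum_const, nsmul_eq_mul, kappaMinus, ← hcard]
  ring

theorem slopeBounded_betheDiff (ha : ∀ k, 0 < a k) (hb : ∀ l, 0 < b l) {j j' : Fin n}
    (h : j ≠ j') :
    SlopeBounded (2 * α) (2 * (α + kappaMinus n a b)) (betheDiff α a b ξ j j') := by
  have hS := ((((slopeBounded_const_mul (2 * α)).comp_sub_const (ξ j')).add
      ((slopeBounded_sum_vRat ha).sub_const (∑ k, vRat (a k) (ξ j')))).add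
    (SlopeBounded.sum ((univ.erase j).erase j') fun m _ =>
      (slopeBounded_crossTerm hb (ξ m)).sub_const (crossTerm b (ξ m) (ξ j')))).add
    (((slopeBounded_sum_vRat hb).comp_sub_const (ξ j')).const_mul zero_le_two)
  have hcard : (((univ.erase j).erase j').card : ℝ) + 1 + 1 = n := by
    have h₁ := card_erase_add_one (mem_erase.2 ⟨h.symm, mem_univ j'⟩)
    have h₂ := card_erase_add_one (mem_univ j)
    rw [card_univ, Fintype.card_fin] at h₂
    exact_mod_cast by omega
  refine hS.mono (by simp) (le_of_eq ?_)
  rw [sum_const, nsmul_eq_mul, kappaMinus, ← hcard]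
  ring

end BetheSystem

theorem ratB_bounds_general
    (n K L : ℕ)
    (α : ℝ) (hα : 0 < α) (ε : ℕ)
    (a : Fin K → ℝ) (b : Fin L → ℝ)
    (ha : ∀ k, 0 < a k) (hb : ∀ l, 0 < b l)
    (μ : Fin n → ℤ) (hμ : ∀ j j' : Fin n, j < j' → μ j' < μ j)
    (hμpos : ∀ j, 0 < μ j)
    (ξ : Fin n → ℝ)
    (hξ : ∀ j : Fin n,
      2 * α * ξ j + (∑ k, vRat (a k) (ξ j)) +
      (∑ j' ∈ Finset.univ.erase j, ∑ l,
        (vRat (b l) (ξ j' + ξ j) - vRat (b l) (ξ j' - ξ j)))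
      = 2 * π * ((μ j : ℝ) + (ε : ℝ) / 2))
    (κ : ℝ)
    (hκ : κ = (∑ k, (a k)⁻¹) + 2 * ((n : ℝ) - 1) * (∑ l, (b l)⁻¹)) :
    (∀ j : Fin n,
      π * ((μ j : ℝ) + (ε : ℝ) / 2) / (α + κ) ≤ ξ j ∧
      ξ j ≤ π * ((μ j : ℝ) + (ε : ℝ) / 2) / α) ∧
    (∀ j j' : Fin n, j < j' →
      π * ((μ j : ℝ) - (μ j' : ℝ)) / (α + κ) ≤ ξ j - ξ j' ∧
      ξ j - ξ j' ≤ π * ((μ j : ℝ) - (μ j' : ℝ)) / α) ∧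
    (∀ j j' : Fin n, j < j' → ξ j' < ξ j) ∧ (∀ j : Fin n, 0 < ξ j) := by
  have hξ' : ∀ j, betheLhs α a b ξ j (ξ j) = 2 * π * ((μ j : ℝ) + (ε : ℝ) / 2) := hξ
  have hsite (j : Fin n) :=
    (slopeBounded_betheLhs α ξ ha hb j).sub_bounds_of_eq hα (x := 0) (y := ξ j) (m := μ j + ε / 2)
      (add_pos_of_pos_of_nonneg (Int.cast_pos.2 (hμpos j)) (by positivity))
      (by rw [betheLhs_apply_zero, sub_zero, hξ' j])
  have hpair {j j' : Fin n} (h : j < j') :=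
    (slopeBounded_betheDiff α ξ ha hb h.ne).sub_bounds_of_eq hα (x := ξ j') (y := ξ j)
      (sub_pos.2 (Int.cast_lt.2 (hμ j j' h)))
      (by rw [betheDiff_apply_left α ξ h.ne, betheDiff_apply_right, hξ' j, hξ' j']; ring)
  subst hκ
  simp only [sub_zero] at hsite
  exact ⟨fun j => (hsite j).2, fun j j' h => (hpair h).2, fun j j' h => (hpair h).1,
    fun j => (hsite j).1⟩

/-- Rational Bethe bounds of type B: estimates for the solutions of the rational
type B critical-point system; in particular `ξ_1 > ξ_2 > ⋯ > ξ_n > 0`. -/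
theorem ratB_bounds
    (n K L : ℕ) (hn : 1 ≤ n)
    (α : ℝ) (hα : 0 < α) (ε : ℕ) (hε : ε = 0 ∨ ε = 1)
    (a : Fin K → ℝ) (b : Fin L → ℝ)
    (ha : ∀ k, 0 < a k) (hb : ∀ l, 0 < b l)
    (μ : Fin n → ℤ) (hμ : ∀ j j' : Fin n, j < j' → μ j' < μ j)
    (hμpos : ∀ j, 0 < μ j)
    (ξ : Fin n → ℝ)
    (hξ : ∀ j : Fin n,
      2 * α * ξ j + (∑ k, vRat (a k) (ξ j)) +
      (∑ j' ∈ Finset.univ.erase j, ∑ l,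
        (vRat (b l) (ξ j' + ξ j) - vRat (b l) (ξ j' - ξ j)))
      = 2 * π * ((μ j : ℝ) + (ε : ℝ) / 2))
    (κ : ℝ)
    (hκ : κ = (∑ k, (a k)⁻¹) + 2 * ((n : ℝ) - 1) * (∑ l, (b l)⁻¹)) :
    (∀ j : Fin n,
      π * ((μ j : ℝ) + (ε : ℝ) / 2) / (α + κ) ≤ ξ j ∧
      ξ j ≤ π * ((μ j : ℝ) + (ε : ℝ) / 2) / α) ∧
    (∀ j j' : Fin n, j < j' →
      π * ((μ j : ℝ) - (μ j' : ℝ)) / (α + κ) ≤ ξ j - ξ j' ∧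
      ξ j - ξ j' ≤ π * ((μ j : ℝ) - (μ j' : ℝ)) / α) ∧
    (∀ j j' : Fin n, j < j' → ξ j' < ξ j) ∧ (∀ j : Fin n, 0 < ξ j) :=
  ratB_bounds_general n K L α hα ε a b ha hb μ hμ hμpos ξ hξ κ hκ
end
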